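/- Given finitely many linear constraints ⟨g_i,x⟩ ≤ a_i (i=1..n), ⟨h_j,x⟩ = b_j (j=1..m) in L^p(μ), there exist a point x̃ ∈ L^p(μ), functionals g̃_i, h̃_j ∈ L^{p'}(μ) and scalars ã_i, b̃_j such that: (i) the new system {⟨g̃_i,x⟩ ≤ ã_i, ⟨h̃_j,x⟩ = b̃_j} has exactly the same solution set as the original system; (ii) the h̃_j are linearly independent; (iii) x̃ satisfies ⟨g̃_i,x̃⟩ < ã_i strictly for all i and ⟨h̃_j,x̃⟩ = b̃_j for all j — provided the original system is consistent. -/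

import Mathlib

open MeasureTheory Filter Topology Pointwise
open scoped ENNReal Classical

noncomputable section

/-- Bouligand tangent cone of a set `C` at `x`. -/
def bouligandTangentCone {E : Type*} [NormedAddCommGroup E] [NormedSpace ℝ E]
    (C : Set E) (x : E) : Set E :=
  {d | ∃ (xs : ℕ → E) (t : ℕ → ℝ), (∀ k, xs k ∈ C) ∧ (∀ k, 0 < t k) ∧
      Tendsto xs atTop (𝓝 x) ∧ Tendsto t atTop (𝓝 0) ∧
      Tendsto (fun k => (t k)⁻¹ • (xs k - x)) atTop (𝓝 d)}

/-- The duality pairing between `L^q(μ)` and `L^p(μ)`. -/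
def pairing {Ω : Type*} [MeasurableSpace Ω] (μ : Measure Ω) {q p : ℝ≥0∞}
    (y : Lp ℝ q μ) (x : Lp ℝ p μ) : ℝ := ∫ ω, y ω * x ω ∂μ

/-- The polar of a subset of `L^p(μ)`, taken in `L^q(μ)`. -/
def polarCone {Ω : Type*} [MeasurableSpace Ω] (μ : Measure Ω) (p q : ℝ≥0∞)
    (S : Set (Lp ℝ p μ)) : Set (Lp ℝ q μ) :=
  {y | ∀ s ∈ S, pairing μ y s ≤ 0}

/-- The normal cone: polar of the Bouligand tangent cone, taken in `L^q(μ)`. -/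
def normalCone {Ω : Type*} [MeasurableSpace Ω] (μ : Measure Ω) (p q : ℝ≥0∞)
    [Fact (1 ≤ p)] (C : Set (Lp ℝ p μ)) (x : Lp ℝ p μ) : Set (Lp ℝ q μ) :=
  polarCone μ p q (bouligandTangentCone C x)

section Aux

variable {Ω : Type*} [MeasurableSpace Ω] {μ : Measure Ω} {p q : ℝ≥0∞}

lemma pairing_integrable (hpq : p⁻¹ + q⁻¹ = 1) (y : Lp ℝ q μ) (x : Lp ℝ p μ) :
    Integrable (fun ω => y ω * x ω) μ := by
  have h1 : (1 : ℝ≥0∞) / 1 = 1 / q + 1 / p := by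
    simp only [one_div]
    rw [add_comm, hpq]
    simp
  have hH : ENNReal.HolderTriple q p 1 := ⟨by rw [add_comm, hpq, inv_one]⟩
  have hm := (Lp.memLp x).smul (r := 1) (Lp.memLp y)
  rw [memLp_one_iff_integrable] at hm
  exact hm

lemma pairing_add_left (hpq : p⁻¹ + q⁻¹ = 1) (y₁ y₂ : Lp ℝ q μ) (x : Lp ℝ p μ) :
    pairing μ (y₁ + y₂) x = pairing μ y₁ x + pairing μ y₂ x := by
  have h1 : pairing μ (y₁ + y₂) x = ∫ ω, (y₁ ω * x ω + y₂ ω * x ω) ∂μ := by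
    refine integral_congr_ae ?_
    filter_upwards [Lp.coeFn_add y₁ y₂] with ω hω
    rw [hω]
    simp [add_mul]
  rw [h1, integral_add (pairing_integrable hpq y₁ x) (pairing_integrable hpq y₂ x)]
  rfl

lemma pairing_smul_left (c : ℝ) (y : Lp ℝ q μ) (x : Lp ℝ p μ) :
    pairing μ (c • y) x = c * pairing μ y x := by
  have h1 : pairing μ (c • y) x = ∫ ω, c * (y ω * x ω) ∂μ := by
    refine integral_congr_ae ?_
    filter_upwards [Lp.coeFn_smul c y] with ω hω
    rw [hω]
    simp [mul_assoc]
  rw [h1, integral_const_mul]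
  rfl

lemma pairing_add_right (hpq : p⁻¹ + q⁻¹ = 1) (y : Lp ℝ q μ) (x₁ x₂ : Lp ℝ p μ) :
    pairing μ y (x₁ + x₂) = pairing μ y x₁ + pairing μ y x₂ := by
  have h1 : pairing μ y (x₁ + x₂) = ∫ ω, (y ω * x₁ ω + y ω * x₂ ω) ∂μ := by
    refine integral_congr_ae ?_
    filter_upwards [Lp.coeFn_add x₁ x₂] with ω hω
    rw [hω]
    simp [mul_add]
  rw [h1, integral_add (pairing_integrable hpq y x₁) (pairing_integrable hpq y x₂)]
  rfl

lemma pairing_smul_right (c : ℝ) (y : Lp ℝ q μ) (x : Lp ℝ p μ) :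
    pairing μ y (c • x) = c * pairing μ y x := by
  have h1 : pairing μ y (c • x) = ∫ ω, c * (y ω * x ω) ∂μ := by
    refine integral_congr_ae ?_
    filter_upwards [Lp.coeFn_smul c x] with ω hω
    rw [hω]
    simp; ring
  rw [h1, integral_const_mul]
  rfl

/-- The pairing as a linear map in the `L^q` argument. -/
def pairingLeft (hpq : p⁻¹ + q⁻¹ = 1) (x : Lp ℝ p μ) : Lp ℝ q μ →ₗ[ℝ] ℝ where
  toFun y := pairing μ y x
  map_add' y₁ y₂ := pairing_add_left hpq y₁ y₂ x
  map_smul' c y := pairing_smul_left c y x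

/-- The pairing as a linear map in the `L^p` argument. -/
def pairingRight (hpq : p⁻¹ + q⁻¹ = 1) (y : Lp ℝ q μ) : Lp ℝ p μ →ₗ[ℝ] ℝ where
  toFun x := pairing μ y x
  map_add' x₁ x₂ := pairing_add_right hpq y x₁ x₂
  map_smul' c x := pairing_smul_right c y x

end Aux

theorem linear_system_mfcq_reformulation
    {Ω : Type*} [MeasurableSpace Ω] (μ : Measure Ω) [SigmaFinite μ]
    (p q : ℝ≥0∞) [Fact (1 ≤ p)] [Fact (1 ≤ q)] (hp : 1 ≤ p) (hpq : p⁻¹ + q⁻¹ = 1)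
    (n m : ℕ) (g : Fin n → Lp ℝ q μ) (a : Fin n → ℝ)
    (h : Fin m → Lp ℝ q μ) (b : Fin m → ℝ)
    -- the original system is consistent
    (hcons : ∃ x : Lp ℝ p μ,
      (∀ i, pairing μ (g i) x ≤ a i) ∧ (∀ j, pairing μ (h j) x = b j)) :
    ∃ (n2 m2 : ℕ) (g2 : Fin n2 → Lp ℝ q μ) (a2 : Fin n2 → ℝ)
      (h2 : Fin m2 → Lp ℝ q μ) (b2 : Fin m2 → ℝ) (x2 : Lp ℝ p μ),
      -- (i) the two systems are equivalent
      (∀ x : Lp ℝ p μ,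
        ((∀ i, pairing μ (g i) x ≤ a i) ∧ (∀ j, pairing μ (h j) x = b j)) ↔
        ((∀ i, pairing μ (g2 i) x ≤ a2 i) ∧ (∀ j, pairing μ (h2 j) x = b2 j))) ∧
      -- (ii) the equality functionals are linearly independent
      LinearIndependent ℝ h2 ∧
      -- (iii) x2 satisfies all inequalities strictly
      (∀ i, pairing μ (g2 i) x2 < a2 i) ∧ (∀ j, pairing μ (h2 j) x2 = b2 j) := by
  classical
  obtain ⟨x₀, hx₀g, hx₀h⟩ := hcons
  set A : Set (Lp ℝ p μ) :=
    {x | (∀ i, pairing μ (g i) x ≤ a i) ∧ (∀ j, pairing μ (h j) x = b j)} with hAdef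
  have hx₀A : x₀ ∈ A := ⟨hx₀g, hx₀h⟩
  set S : Set (Fin n) := {i | ∃ x ∈ A, pairing μ (g i) x < a i} with hSdef
  have hchoice : ∀ i : Fin n, ∃ x, x ∈ A ∧ (i ∈ S → pairing μ (g i) x < a i) := by
    intro i
    by_cases hi : i ∈ S
    · obtain ⟨x, hxA, hx⟩ := hi
      exact ⟨x, hxA, fun _ => hx⟩
    · exact ⟨x₀, hx₀A, fun hi' => absurd hi' hi⟩
  choose c hcA hcS using hchoice
  set xt : Lp ℝ p μ := ((n : ℝ) + 1)⁻¹ • (x₀ + ∑ i, c i) with hxtdef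
  have hnpos : (0 : ℝ) < (n : ℝ) + 1 := by positivity
  have hpairxt : ∀ y : Lp ℝ q μ,
      pairing μ y xt = ((n : ℝ) + 1)⁻¹ * (pairing μ y x₀ + ∑ i, pairing μ y (c i)) := by
    intro y
    show pairingRight hpq y xt = _
    rw [hxtdef, _root_.map_smul, map_add, map_sum]
    rfl
  have heqai : ∀ i : Fin n, ((n : ℝ) + 1)⁻¹ * (a i + (n : ℝ) * a i) = a i := by
    intro i
    field_simp
    ring
  have hxtA : xt ∈ A := by
    constructor
    · intro i
      rw [hpairxt]
      have hsum : ∑ k, pairing μ (g i) (c k) ≤ ∑ _k : Fin n, a i :=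
        Finset.sum_le_sum fun k _ => (hcA k).1 i
      have : pairing μ (g i) x₀ + ∑ k, pairing μ (g i) (c k) ≤ a i + (n : ℝ) * a i := by
        have := add_le_add (hx₀g i) hsum
        simpa using this
      calc ((n : ℝ) + 1)⁻¹ * (pairing μ (g i) x₀ + ∑ k, pairing μ (g i) (c k))
          ≤ ((n : ℝ) + 1)⁻¹ * (a i + (n : ℝ) * a i) :=
            mul_le_mul_of_nonneg_left this (by positivity)
        _ = a i := heqai i
    · intro j
      rw [hpairxt]
      have hsum : ∑ k, pairing μ (h j) (c k) = (n : ℝ) * b j := by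
        rw [Finset.sum_congr rfl fun k _ => (hcA k).2 j]
        simp [mul_comm]
      rw [hx₀h j, hsum]
      field_simp
      ring
  have hxtStrict : ∀ i ∈ S, pairing μ (g i) xt < a i := by
    intro i hi
    rw [hpairxt]
    have hsum : ∑ k, pairing μ (g i) (c k) < ∑ _k : Fin n, a i :=
      Finset.sum_lt_sum (fun k _ => (hcA k).1 i) ⟨i, Finset.mem_univ i, hcS i hi⟩
    have hlt : pairing μ (g i) x₀ + ∑ k, pairing μ (g i) (c k) < a i + (n : ℝ) * a i := by
      have := add_lt_add_of_le_of_lt (hx₀g i) hsum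
      simpa using this
    calc ((n : ℝ) + 1)⁻¹ * (pairing μ (g i) x₀ + ∑ k, pairing μ (g i) (c k))
        < ((n : ℝ) + 1)⁻¹ * (a i + (n : ℝ) * a i) :=
          mul_lt_mul_of_pos_left hlt (by positivity)
      _ = a i := heqai i
  have hnotS : ∀ i ∉ S, ∀ x ∈ A, pairing μ (g i) x = a i := by
    intro i hi x hx
    refine le_antisymm (hx.1 i) ?_
    by_contra hlt
    push_neg at hlt
    exact hi ⟨x, hx, hlt⟩
  -- new inequality system: inequalities indexed by S
  set s : Finset (Fin n) := Finset.univ.filter (· ∈ S) with hsdef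
  set eS := s.equivFin with heSdef
  -- new equality system: maximal linearly independent subfamily of the equality vectors
  set T : Set (Lp ℝ q μ) := Set.range h ∪ (g '' Sᶜ) with hTdef
  have hTval : ∀ v ∈ T, ∀ x ∈ A, pairing μ v x = pairing μ v xt := by
    intro v hv x hx
    rcases hv with ⟨j, rfl⟩ | ⟨i, hi, rfl⟩
    · rw [hx.2 j, hxtA.2 j]
    · rw [hnotS i hi x hx, hnotS i hi xt hxtA]
  obtain ⟨t, htT, hspan, hli⟩ := exists_linearIndependent ℝ T
  have hTfin : T.Finite := (Set.finite_range h).union ((Set.toFinite (Sᶜ)).image g)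
  have htfin : t.Finite := hTfin.subset htT
  set tf : Finset (Lp ℝ q μ) := htfin.toFinset with htfdef
  set et := tf.equivFin with hetdef
  set h2 : Fin tf.card → Lp ℝ q μ := fun k => (et.symm k : Lp ℝ q μ) with hh2def
  set b2 : Fin tf.card → ℝ := fun k => pairing μ (h2 k) xt with hb2def
  have h2t : ∀ k, h2 k ∈ t := fun k => htfin.mem_toFinset.mp (et.symm k).2
  have h2surj : ∀ v ∈ t, ∃ k, h2 k = v := by
    intro v hv
    refine ⟨et ⟨v, htfin.mem_toFinset.mpr hv⟩, ?_⟩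
    simp [hh2def]
  have hspanEq : ∀ x : Lp ℝ p μ, (∀ k, pairing μ (h2 k) x = b2 k) →
      ∀ v ∈ T, pairing μ v x = pairing μ v xt := by
    intro x hx v hv
    set L : Lp ℝ q μ →ₗ[ℝ] ℝ := pairingLeft hpq x - pairingLeft hpq xt with hLdef
    have ht_ker : t ⊆ (LinearMap.ker L : Set (Lp ℝ q μ)) := by
      intro u hu
      obtain ⟨k, rfl⟩ := h2surj u hu
      have := hx k
      rw [hb2def] at this
      simp only [SetLike.mem_coe, LinearMap.mem_ker, hLdef, LinearMap.sub_apply]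
      show pairing μ (h2 k) x - pairing μ (h2 k) xt = 0
      rw [this]
      ring
    have hker : Submodule.span ℝ t ≤ LinearMap.ker L := Submodule.span_le.mpr ht_ker
    have hvmem : v ∈ Submodule.span ℝ t := by
      rw [hspan]; exact Submodule.subset_span hv
    have hv0 : L v = 0 := hker hvmem
    have : pairing μ v x - pairing μ v xt = 0 := hv0
    linarith
  refine ⟨s.card, tf.card, fun k => g (eS.symm k), fun k => a (eS.symm k), h2, b2, xt,
    ?_, ?_, ?_, ?_⟩
  · -- (i) equivalence
    intro x
    constructor
    · intro hxA
      have hxA' : x ∈ A := hxA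
      constructor
      · intro k
        exact hxA'.1 (eS.symm k)
      · intro k
        have := hTval (h2 k) (htT (h2t k)) x hxA'
        rw [hb2def]
        exact this
    · rintro ⟨hg2, hh2⟩
      have hveq := hspanEq x hh2
      constructor
      · intro i
        by_cases hi : i ∈ S
        · have him : i ∈ s := Finset.mem_filter.mpr ⟨Finset.mem_univ i, hi⟩
          have := hg2 (eS ⟨i, him⟩)
          simpa using this
        · have hgT : g i ∈ T := Or.inr ⟨i, hi, rfl⟩
          rw [hveq _ hgT]
          exact (hnotS i hi xt hxtA).le
      · intro j
        have hhT : h j ∈ T := Or.inl ⟨j, rfl⟩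
        rw [hveq _ hhT, hxtA.2 j]
  · -- (ii) linear independence
    have hinj : Function.Injective
        (fun k : Fin tf.card => (⟨h2 k, h2t k⟩ : t)) := by
      intro k1 k2 hk
      have : (et.symm k1 : Lp ℝ q μ) = (et.symm k2 : Lp ℝ q μ) := by
        simpa [hh2def] using congrArg Subtype.val hk
      have : et.symm k1 = et.symm k2 := Subtype.ext this
      exact et.symm.injective this
    have := hli.comp _ hinj
    exact this
  · -- (iii) strict inequalities
    intro k
    have hmem : ((eS.symm k : Fin n)) ∈ s := (eS.symm k).2
    have hiS : (eS.symm k : Fin n) ∈ S := (Finset.mem_filter.mp hmem).2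
    exact hxtStrict _ hiS
  · -- (iii) equalities
    intro k
    rfl
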